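/- arXiv:1705.04895 — 7 statements merged into one kernel-verified Lean document; each statement's English description precedes it below -/
import Mathlib

section
/- If h has p-th derivative Lipschitz continuous with constant (p-1)!·L on [x, x+s], then ‖∇h(x+s) - ∇_s T_p(x,s)‖ ≤ L·‖s‖^p, where ∇_s T_p(x,s) denotes the gradient of the Taylor polynomial with respect to s. -/
/-!
Write `g = ∇h`. Differentiating the Taylor polynomial term by term gives
`∇_s T_p(x, s) = ∑_{k < p} (1/k!) ∇^k g(x)[s]^k`, the Taylor polynomial of order `p - 1` of `g`;
this needs the iterated derivatives to be symmetric, which for `C^k` functions follows by induction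
from the symmetry of second derivatives. The claim is then a Taylor remainder estimate for `g`:
if the `q`-th derivative of `f` is `M`-Lipschitz on `[x, x + s]`, then
`‖f(x + s) - T_q(x, s)‖ ≤ M ‖s‖^(q+1) / (q+1)!`. By induction on `q`: the derivative in `t` of
`f(x + t s) - T_q(x, t s)` is the order `q - 1` remainder of `∇f` at `t s`, applied to `s`, so
the bound for `∇f` integrates to the bound for `f`. With `M = (p-1)! L` this gives `L ‖s‖^p / p`.
-/

open Set Topology Finset
open scoped Nat

universe u

section RCLike

-- `E` and `F` share a universe so that inductions on the order can pass from `f` to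
-- `fderiv 𝕜 f : E → E →L[𝕜] F`.
variable {𝕜 : Type*} {E F : Type u} [RCLike 𝕜] [NormedAddCommGroup E] [NormedSpace 𝕜 E]
  [NormedAddCommGroup F] [NormedSpace 𝕜 F]

variable (𝕜) in
noncomputable def taylorPoly (f : E → F) (x : E) (q : ℕ) (v : E) : F :=
  ∑ j ∈ range (q + 1), (j ! : 𝕜)⁻¹ • iteratedFDeriv 𝕜 j f x (fun _ => v)

theorem taylorPoly_apply_zero (f : E → F) (x : E) (q : ℕ) : taylorPoly 𝕜 f x q 0 = f x := by
  rw [taylorPoly, sum_range_succ']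
  simp [← Pi.zero_def]

theorem norm_sub_iteratedFDeriv_fderiv (k : ℕ) (f : E → F) (y z : E) :
    ‖iteratedFDeriv 𝕜 k (fderiv 𝕜 f) y - iteratedFDeriv 𝕜 k (fderiv 𝕜 f) z‖ =
      ‖iteratedFDeriv 𝕜 (k + 1) f y - iteratedFDeriv 𝕜 (k + 1) f z‖ := by
  simp only [iteratedFDeriv_succ_eq_comp_right, Function.comp_apply, ← dist_eq_norm,
    LinearIsometryEquiv.dist_map]

theorem iteratedFDeriv_apply_comm {B : E → E →L[𝕜] E →L[𝕜] F} {x : E}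
    (hB : ∀ᶠ y in 𝓝 x, ∀ v w, B y v w = B y w v) (q : ℕ) (m : Fin q → E) (v w : E) :
    iteratedFDeriv 𝕜 q B x m v w = iteratedFDeriv 𝕜 q B x m w v := by
  let e : (E →L[𝕜] E →L[𝕜] F) ≃L[𝕜] (E →L[𝕜] E →L[𝕜] F) :=
    (ContinuousLinearMap.flipₗᵢ 𝕜 E E F).toContinuousLinearEquiv
  have hBe : B =ᶠ[𝓝 x] e ∘ B := hB.mono fun y hy => by ext v w; exact hy v w
  calc iteratedFDeriv 𝕜 q B x m v w = iteratedFDeriv 𝕜 q (e ∘ B) x m v w := by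
        rw [(hBe.iteratedFDeriv 𝕜 q).eq_of_nhds]
    _ = iteratedFDeriv 𝕜 q B x m w v := by
        -- `F` and `G` are given so that the normed instances agree with those in the type of `e`.
        have hcomp := ContinuousLinearEquiv.iteratedFDeriv_comp_left (𝕜 := 𝕜)
          (F := E →L[𝕜] E →L[𝕜] F) (G := E →L[𝕜] E →L[𝕜] F) e (f := B) (x := x) (i := q)
        exact congrArg (fun A : E [×q]→L[𝕜] E →L[𝕜] E →L[𝕜] F => A m v w) hcomp

theorem iteratedFDeriv_update_const {f : E → F} {x : E} {k : ℕ} (hf : ContDiffAt 𝕜 (k + 1) f x)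
    (i : Fin (k + 1)) (v w : E) :
    iteratedFDeriv 𝕜 (k + 1) f x (Function.update (fun _ => v) i w) =
      iteratedFDeriv 𝕜 k (fderiv 𝕜 f) x (fun _ => v) w := by
  induction k generalizing F f with
  | zero =>
    obtain rfl : i = 0 := Subsingleton.elim (α := Fin 1) _ _
    simp
  | succ k ih =>
    induction i using Fin.lastCases with
    | last =>
      rw [iteratedFDeriv_succ_apply_right, Fin.init_update_last, Function.update_self]
      rfl
    | cast j =>
      have hg : ContDiffAt 𝕜 (k + 1) (fderiv 𝕜 f) x := by exact_mod_cast hf.fderiv_right_succ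
      have hsymm : ∀ᶠ y in 𝓝 x, ∀ a b,
          fderiv 𝕜 (fderiv 𝕜 f) y a b = fderiv 𝕜 (fderiv 𝕜 f) y b a :=
        (hf.eventually (by simp)).mono fun y hy =>
          hy.isSymmSndFDerivAt (by
            rw [minSmoothness_of_isRCLikeNormedField]; exact_mod_cast (by omega : 2 ≤ k + 1 + 1))
      calc iteratedFDeriv 𝕜 (k + 1 + 1) f x (Function.update (fun _ => v) j.castSucc w)
          = iteratedFDeriv 𝕜 (k + 1) (fderiv 𝕜 f) x (Function.update (fun _ => v) j w) v := by
            rw [iteratedFDeriv_succ_apply_right, Function.update_of_ne (Fin.castSucc_lt_last j).ne',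
              Fin.init_update_castSucc]
            rfl
        _ = iteratedFDeriv 𝕜 k (fderiv 𝕜 (fderiv 𝕜 f)) x (fun _ => v) w v :=
            congrArg (· v) (ih hg j)
        _ = iteratedFDeriv 𝕜 k (fderiv 𝕜 (fderiv 𝕜 f)) x (fun _ => v) v w :=
            iteratedFDeriv_apply_comm hsymm _ _ _ _
        _ = iteratedFDeriv 𝕜 (k + 1) (fderiv 𝕜 f) x (fun _ => v) w := by
            rw [iteratedFDeriv_succ_apply_right]
            rfl

theorem hasFDerivAt_iteratedFDeriv_apply_const {f : E → F} {x : E} {k : ℕ}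
    (hf : ContDiffAt 𝕜 (k + 1) f x) (v : E) :
    HasFDerivAt (fun v => iteratedFDeriv 𝕜 (k + 1) f x (fun _ => v))
      ((k + 1 : 𝕜) • iteratedFDeriv 𝕜 k (fderiv 𝕜 f) x (fun _ => v)) v := by
  let diag : E →L[𝕜] Fin (k + 1) → E := ContinuousLinearMap.pi fun _ => ContinuousLinearMap.id 𝕜 E
  refine ((iteratedFDeriv 𝕜 (k + 1) f x).hasFDerivAt (fun _ => v)).comp v diag.hasFDerivAt
    |>.congr_fderiv ?_
  ext w
  simp [diag, ContinuousMultilinearMap.linearDeriv_apply, iteratedFDeriv_update_const hf,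
    ← Nat.cast_smul_eq_nsmul 𝕜]

theorem hasFDerivAt_taylorPoly {f : E → F} {x : E} {q : ℕ} (hf : ContDiffAt 𝕜 (q + 1) f x)
    (v : E) : HasFDerivAt (taylorPoly 𝕜 f x (q + 1)) (taylorPoly 𝕜 (fderiv 𝕜 f) x q v) v := by
  have hterm : ∀ k ∈ range (q + 1),
      HasFDerivAt (fun v => ((k + 1)! : 𝕜)⁻¹ • iteratedFDeriv 𝕜 (k + 1) f x (fun _ => v))
        ((k ! : 𝕜)⁻¹ • iteratedFDeriv 𝕜 k (fderiv 𝕜 f) x (fun _ => v)) v := by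
    intro k hk
    have hfk : ContDiffAt 𝕜 (k + 1) f x :=
      hf.of_le (by exact_mod_cast Nat.succ_le_succ (Nat.lt_succ_iff.1 (mem_range.1 hk)))
    refine (hasFDerivAt_iteratedFDeriv_apply_const hfk v).const_smul ((k + 1)! : 𝕜)⁻¹
      |>.congr_fderiv ?_
    rw [smul_smul, Nat.factorial_succ]
    push_cast
    field_simp
  unfold taylorPoly
  simp_rw [sum_range_succ' _ (q + 1), iteratedFDeriv_zero_apply]
  exact (HasFDerivAt.fun_sum hterm).add_const _

theorem hasDerivAt_sub_taylorPoly_smul {f : E → F} {x s : E} {q : ℕ} {t : 𝕜}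
    (hfx : ContDiffAt 𝕜 (q + 1) f x) (hft : DifferentiableAt 𝕜 f (x + t • s)) :
    HasDerivAt (fun t => f (x + t • s) - taylorPoly 𝕜 f x (q + 1) (t • s))
      ((fderiv 𝕜 f (x + t • s) - taylorPoly 𝕜 (fderiv 𝕜 f) x q (t • s)) s) t := by
  have hline : HasDerivAt (fun t : 𝕜 => t • s) s t := by
    simpa using (hasDerivAt_id t).smul_const s
  have hP : HasDerivAt (fun t => taylorPoly 𝕜 f x (q + 1) (t • s))
      (taylorPoly 𝕜 (fderiv 𝕜 f) x q (t • s) s) t :=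
    HasFDerivAt.comp_hasDerivAt (l := taylorPoly 𝕜 f x (q + 1)) t
      (hasFDerivAt_taylorPoly hfx (t • s)) hline
  exact (hft.hasFDerivAt.comp_hasDerivAt t (hline.const_add x)).sub hP

end RCLike

theorem hasDerivAt_pow_succ_div_factorial (n : ℕ) (t : ℝ) :
    HasDerivAt (fun t : ℝ => t ^ (n + 1) / (n + 1)!) (t ^ n / n !) t := by
  refine ((hasDerivAt_pow (n + 1) t).div_const ((n + 1)! : ℝ)).congr_deriv ?_
  rw [Nat.factorial_succ]
  push_cast
  field_simp

section Real

variable {E F : Type u} [NormedAddCommGroup E] [NormedSpace ℝ E]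
  [NormedAddCommGroup F] [NormedSpace ℝ F]

theorem norm_sub_taylorPoly_le {f : E → F} {x s : E} {q : ℕ} {M : ℝ}
    (hf : ∀ y ∈ segment ℝ x (x + s), ContDiffAt ℝ q f y)
    (hlip : ∀ y ∈ segment ℝ x (x + s), ∀ z ∈ segment ℝ x (x + s),
      ‖iteratedFDeriv ℝ q f y - iteratedFDeriv ℝ q f z‖ ≤ M * ‖y - z‖) :
    ‖f (x + s) - taylorPoly ℝ f x q s‖ ≤ M * ‖s‖ ^ (q + 1) / (q + 1)! := by
  induction q generalizing F f s with
  | zero =>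
    have h := hlip _ (right_mem_segment ℝ x (x + s)) _ (left_mem_segment ℝ x (x + s))
    simp only [iteratedFDeriv_zero_eq_comp, Function.comp_apply, ← dist_eq_norm,
      LinearIsometryEquiv.dist_map] at h
    simpa [taylorPoly, dist_eq_norm] using h
  | succ q ih =>
    have hmem : ∀ t ∈ Icc (0 : ℝ) 1, x + t • s ∈ segment ℝ x (x + s) := fun t ht => by
      rw [segment_eq_image']
      exact ⟨t, ht, by rw [add_sub_cancel_left]⟩
    have hx := left_mem_segment ℝ x (x + s)
    have hfx : ContDiffAt ℝ (q + 1) f x := by exact_mod_cast hf x hx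
    set g := fderiv ℝ f
    set R : ℝ → F := fun t => f (x + t • s) - taylorPoly ℝ f x (q + 1) (t • s)
    set C := M * ‖s‖ ^ (q + 2)
    have hR : ∀ t ∈ Icc (0 : ℝ) 1,
        HasDerivAt R ((g (x + t • s) - taylorPoly ℝ g x q (t • s)) s) t := fun t ht =>
      hasDerivAt_sub_taylorPoly_smul hfx ((hf _ (hmem t ht)).differentiableAt (by simp))
    have hR'_le : ∀ t ∈ Ico (0 : ℝ) 1,
        ‖(g (x + t • s) - taylorPoly ℝ g x q (t • s)) s‖ ≤ C * (t ^ (q + 1) / (q + 1)!) := by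
      intro t ht
      have hsub : segment ℝ x (x + t • s) ⊆ segment ℝ x (x + s) :=
        (convex_segment _ _).segment_subset hx (hmem t (Ico_subset_Icc_self ht))
      have hrem := ih (f := g) (s := t • s)
        (fun y hy => (hf y (hsub hy)).fderiv_right_succ)
        (fun y hy z hz => (norm_sub_iteratedFDeriv_fderiv q f y z).trans_le
          (hlip y (hsub hy) z (hsub hz)))
      calc _ ≤ ‖g (x + t • s) - taylorPoly ℝ g x q (t • s)‖ * ‖s‖ :=
            ContinuousLinearMap.le_opNorm _ _
        _ ≤ M * ‖t • s‖ ^ (q + 1) / (q + 1)! * ‖s‖ := by gcongr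
        _ = C * (t ^ (q + 1) / (q + 1)!) := by
          rw [norm_smul, Real.norm_of_nonneg ht.1]; ring
    have hB (t : ℝ) : HasDerivAt (fun t => C * (t ^ (q + 2) / (q + 2)!))
        (C * (t ^ (q + 1) / (q + 1)!)) t :=
      (hasDerivAt_pow_succ_div_factorial (q + 1) t).const_mul C
    have hR0 : ‖R 0‖ ≤ C * (0 ^ (q + 2) / (q + 2)!) := by simp [R, taylorPoly_apply_zero]
    have hR1 := image_norm_le_of_norm_deriv_right_le_deriv_boundary
      (fun t ht => (hR t ht).continuousAt.continuousWithinAt)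
      (fun t ht => (hR t (Ico_subset_Icc_self ht)).hasDerivWithinAt) hR0 hB hR'_le
      (right_mem_Icc.2 zero_le_one)
    simp only [R, one_smul, one_pow] at hR1
    rwa [mul_one_div] at hR1

end Real

theorem stmt1 (n p : ℕ) (hp : 1 ≤ p) (L : ℝ) (hL : 0 ≤ L)
    (h : EuclideanSpace ℝ (Fin n) → ℝ) (x s : EuclideanSpace ℝ (Fin n))
    (U : Set (EuclideanSpace ℝ (Fin n))) (hU : IsOpen U)
    (hseg : segment ℝ x (x + s) ⊆ U)
    (hsmooth : ContDiffOn ℝ p h U)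
    (hlip : ∀ y ∈ segment ℝ x (x + s), ∀ z ∈ segment ℝ x (x + s),
      ‖iteratedFDeriv ℝ p h y - iteratedFDeriv ℝ p h z‖ ≤
        (Nat.factorial (p - 1) : ℝ) * L * ‖y - z‖) :
    ‖fderiv ℝ h (x + s) -
      fderiv ℝ (fun v => ∑ j ∈ Finset.range (p + 1),
        (1 / (Nat.factorial j : ℝ)) * iteratedFDeriv ℝ j h x (fun _ => v)) s‖
      ≤ L * ‖s‖ ^ p := by
  obtain ⟨q, rfl⟩ : ∃ q, p = q + 1 := ⟨p - 1, (Nat.succ_pred_eq_of_pos hp).symm⟩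
  have hC : ∀ y ∈ segment ℝ x (x + s), ContDiffAt ℝ (q + 1) h y := fun y hy =>
    by exact_mod_cast hsmooth.contDiffAt (hU.mem_nhds (hseg hy))
  have hT : (fun v => ∑ j ∈ range (q + 1 + 1),
      (1 / (j ! : ℝ)) * iteratedFDeriv ℝ j h x (fun _ => v)) = taylorPoly ℝ h x (q + 1) := by
    funext v
    simp [taylorPoly]
  rw [hT, (hasFDerivAt_taylorPoly (hC x (left_mem_segment ℝ x (x + s))) s).fderiv]
  calc _ ≤ q ! * L * ‖s‖ ^ (q + 1) / (q + 1)! :=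
        norm_sub_taylorPoly_le (fun y hy => (hC y hy).fderiv_right_succ)
          fun y hy z hz => (norm_sub_iteratedFDeriv_fderiv q h y z).trans_le
            (by simpa using hlip y hy z hz)
    _ = L * ‖s‖ ^ (q + 1) / (q + 1) := by
      rw [Nat.factorial_succ]
      push_cast
      field_simp
    _ ≤ L * ‖s‖ ^ (q + 1) := div_le_self (by positivity) (by simp)
end

section
/- Suppose f(x+s) ≤ T_p(x,s) + (L/p)‖s‖^{p+1}, T_p(x,0) - T_p(x,s) ≥ (σ/(p+1))‖s‖^{p+1} with s ≠ 0, and σ ≥ L(p+1)/(p(1-η)) for some η ∈ (0,1). Then the ratio ρ = (f(x) - f(x+s))/(T_p(x,0) - T_p(x,s)) satisfies ρ ≥ η, where f(x) = T_p(x,0). -/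
theorem stmt3 (n p : ℕ) (hp : 1 ≤ p) (L : ℝ) (hL : 0 ≤ L) (σ η : ℝ) (hσ : 0 < σ)
    (hη : η ∈ Set.Ioo (0 : ℝ) 1) (x s : EuclideanSpace ℝ (Fin n)) (hs : s ≠ 0)
    (f T : EuclideanSpace ℝ (Fin n) → ℝ)
    (hT0 : T 0 = f x)
    (hub : f (x + s) ≤ T s + L / p * ‖s‖ ^ (p + 1))
    (hdec : T 0 - T s ≥ σ / (p + 1) * ‖s‖ ^ (p + 1))
    (hσbig : σ ≥ L * (p + 1) / (p * (1 - η))) :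
    (f x - f (x + s)) / (T 0 - T s) ≥ η := by
  obtain ⟨hη0, hη1⟩ := hη
  have hpR : (0:ℝ) < p := by exact_mod_cast hp
  have hsn : (0:ℝ) < ‖s‖ := norm_pos_iff.mpr hs
  have hns : (0:ℝ) < ‖s‖ ^ (p + 1) := by positivity
  have hp1 : (0:ℝ) < (p:ℝ) + 1 := by linarith
  have hD : 0 < T 0 - T s := lt_of_lt_of_le (by positivity) hdec
  have h1η : (0:ℝ) < 1 - η := by linarith
  have hkey : L * ((p:ℝ) + 1) ≤ σ * ((p:ℝ) * (1 - η)) := by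
    have := (div_le_iff₀ (by positivity)).mp hσbig
    linarith
  have h2 : L / p * ‖s‖ ^ (p + 1) ≤ (1 - η) * (σ / (p + 1) * ‖s‖ ^ (p + 1)) := by
    have hq : L / p ≤ (1 - η) * σ / ((p:ℝ) + 1) := by
      rw [div_le_div_iff₀ hpR hp1]
      nlinarith
    calc L / p * ‖s‖ ^ (p + 1) ≤ (1 - η) * σ / ((p:ℝ) + 1) * ‖s‖ ^ (p + 1) :=
          mul_le_mul_of_nonneg_right hq hns.le
      _ = (1 - η) * (σ / ((p:ℝ) + 1) * ‖s‖ ^ (p + 1)) := by ring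
  have h3 : (1 - η) * (σ / (p + 1) * ‖s‖ ^ (p + 1)) ≤ (1 - η) * (T 0 - T s) :=
    mul_le_mul_of_nonneg_left hdec h1η.le
  have hnum : η * (T 0 - T s) ≤ f x - f (x + s) := by
    have : f x - f (x + s) ≥ (T 0 - T s) - L / p * ‖s‖ ^ (p + 1) := by
      rw [← hT0]; linarith
    nlinarith
  rw [ge_iff_le, le_div_iff₀ hD]
  linarith
end

section
/- In the ARpCC algorithm, the regularization parameter satisfies σ_k ≤ σ_max := max(σ_0, γ_3·L·(p+1)/(p·(1-η_2))) for all k, where any iteration with σ_k ≥ L(p+1)/(p(1-η_2)) is very successful and hence σ_{k+1} ≤ σ_k, while otherwise σ_{k+1} ≤ γ_3·σ_k. -/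
theorem stmt4 (p : ℕ) (hp : 1 ≤ p) (L γ3 η2 : ℝ) (hL : 0 ≤ L) (hγ3 : 1 < γ3)
    (hη2 : η2 ∈ Set.Ioo (0 : ℝ) 1) (σ : ℕ → ℝ) (hσpos : ∀ k, 0 < σ k)
    (hup : ∀ k, (L * (p + 1) / (p * (1 - η2)) ≤ σ k → σ (k + 1) ≤ σ k) ∧
      (σ k < L * (p + 1) / (p * (1 - η2)) → σ (k + 1) ≤ γ3 * σ k)) :
    ∀ k, σ k ≤ max (σ 0) (γ3 * L * (p + 1) / (p * (1 - η2))) := by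
  intro k
  induction k with
  | zero => exact le_max_left _ _
  | succ k ih =>
    rcases le_or_gt (L * (p + 1) / (p * (1 - η2))) (σ k) with h | h
    · exact le_trans ((hup k).1 h) ih
    · refine le_trans ((hup k).2 h) (le_max_of_le_right ?_)
      have hγ0 : 0 < γ3 := lt_trans one_pos hγ3
      have : γ3 * σ k ≤ γ3 * (L * (p + 1) / (p * (1 - η2))) :=
        mul_le_mul_of_nonneg_left h.le hγ0.le
      calc γ3 * σ k ≤ γ3 * (L * (p + 1) / (p * (1 - η2))) := this
        _ = γ3 * L * (p + 1) / (p * (1 - η2)) := by ring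
end

section
/- Suppose σ_j ≤ σ_max for all j ≤ k in the ARpCC algorithm, where at each successful iteration σ_{j+1} ≥ γ_1·σ_j with γ_1 ∈ (0,1), and at each unsuccessful iteration σ_{j+1} ≥ γ_2·σ_j with γ_2 > 1. Then the total iteration count satisfies k ≤ |S_k|·(1 + |log γ_1|/log γ_2) + (1/log γ_2)·log(σ_max/σ_0), where S_k is the set of successful iterations up to k. -/
theorem stmt5 (γ1 γ2 σ0 σmax : ℝ) (hγ1 : 0 < γ1) (hγ12 : γ1 < 1) (hγ2 : 1 < γ2)
    (σ : ℕ → ℝ) (hσ0 : σ 0 = σ0) (hσ0pos : 0 < σ0) (hσpos : ∀ j, 0 < σ j)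
    (succ : ℕ → Bool) (k : ℕ)
    (hmax : ∀ j ≤ k, σ j ≤ σmax)
    (hs : ∀ j < k, succ j = true → γ1 * σ j ≤ σ (j + 1))
    (hu : ∀ j < k, succ j = false → γ2 * σ j ≤ σ (j + 1)) :
    (k : ℝ) ≤ (((Finset.range k).filter (fun j => succ j = true)).card : ℝ) *
        (1 + |Real.log γ1| / Real.log γ2) + (1 / Real.log γ2) * Real.log (σmax / σ0) := by
  set S : ℕ → ℕ := fun j => ((Finset.range j).filter (fun i => succ i = true)).card with hS
  have hlog2 : 0 < Real.log γ2 := Real.log_pos hγ2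
  have key : ∀ j ≤ k, σ0 * γ1 ^ (S j) * γ2 ^ (j - S j) ≤ σ j := by
    intro j
    induction j with
    | zero => intro _; simp only [hS]; simp [hσ0]
    | succ n ih =>
      intro h
      have hn : n < k := h
      have ihn := ih (le_of_lt hn)
      have hSle : S n ≤ n := by
        simpa [hS] using Finset.card_filter_le (Finset.range n) (fun i => succ i = true)
      cases hsc : succ n with
      | true =>
        have hstep := hs n hn hsc
        have hSn1 : S (n+1) = S n + 1 := by
          have heq : (Finset.range (n+1)).filter (fun i => succ i = true) =
              insert n ((Finset.range n).filter (fun i => succ i = true)) := by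
            rw [Finset.range_add_one, Finset.filter_insert, if_pos hsc]
          simp only [hS]
          rw [heq, Finset.card_insert_of_notMem (by simp)]
        rw [hSn1]
        have hsub : (n + 1) - (S n + 1) = n - S n := by omega
        rw [hsub, pow_succ]
        calc σ0 * (γ1 ^ S n * γ1) * γ2 ^ (n - S n)
            = γ1 * (σ0 * γ1 ^ S n * γ2 ^ (n - S n)) := by ring
          _ ≤ γ1 * σ n := mul_le_mul_of_nonneg_left ihn hγ1.le
          _ ≤ σ (n+1) := hstep
      | false =>
        have hstep := hu n hn hsc
        have hSn1 : S (n+1) = S n := by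
          simp [hS, Finset.range_add_one, Finset.filter_insert, hsc]
        rw [hSn1]
        have hsub : (n + 1) - S n = (n - S n) + 1 := by omega
        rw [hsub, pow_succ]
        calc σ0 * γ1 ^ S n * (γ2 ^ (n - S n) * γ2)
            = γ2 * (σ0 * γ1 ^ S n * γ2 ^ (n - S n)) := by ring
          _ ≤ γ2 * σ n := mul_le_mul_of_nonneg_left ihn (by linarith)
          _ ≤ σ (n+1) := hstep
  have hk := key k le_rfl
  have hkmax : σ k ≤ σmax := hmax k le_rfl
  have hSlek : S k ≤ k := by
    simpa [hS] using Finset.card_filter_le (Finset.range k) (fun i => succ i = true)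
  have hσmaxpos : 0 < σmax := lt_of_lt_of_le (hσpos k) hkmax
  have hpos : (0:ℝ) < σ0 * γ1 ^ S k * γ2 ^ (k - S k) := by positivity
  have hloglog : Real.log (σ0 * γ1 ^ S k * γ2 ^ (k - S k)) ≤ Real.log σmax :=
    Real.log_le_log hpos (hk.trans hkmax)
  rw [Real.log_mul (by positivity) (by positivity),
    Real.log_mul (by positivity) (by positivity),
    Real.log_pow, Real.log_pow] at hloglog
  have hcast : ((k - S k : ℕ) : ℝ) = (k : ℝ) - (S k : ℝ) := by
    push_cast [Nat.cast_sub hSlek]; ring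
  rw [hcast] at hloglog
  have hlog1 : Real.log γ1 < 0 := Real.log_neg hγ1 hγ12
  have habs : |Real.log γ1| = -Real.log γ1 := abs_of_neg hlog1
  rw [habs, Real.log_div (ne_of_gt hσmaxpos) (ne_of_gt hσ0pos)]
  set s : ℝ := ((S k : ℕ) : ℝ)
  have h2 : ((k:ℝ) - s) * Real.log γ2 ≤ Real.log σmax - Real.log σ0 - s * Real.log γ1 := by
    nlinarith [hloglog]
  have h3 : (k:ℝ) - s ≤ (Real.log σmax - Real.log σ0 - s * Real.log γ1) / Real.log γ2 :=
    (le_div_iff₀ hlog2).2 h2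
  rw [sub_div, sub_div] at h3
  have e1 : s * (1 + -Real.log γ1 / Real.log γ2) =
      s - s * Real.log γ1 / Real.log γ2 := by ring
  have e2 : 1 / Real.log γ2 * (Real.log σmax - Real.log σ0) =
      Real.log σmax / Real.log γ2 - Real.log σ0 / Real.log γ2 := by ring
  rw [e1, e2]
  linarith
end

section
/- For any convex closed set F, point y ∈ F, and gradients g₁, g₂ with ‖g₁ - g₂‖ ≤ E, the criticality measures satisfy |χ(g₁, y) - χ(g₂, y)| ≤ κ_n·E, where χ(g, y) = |min_{y+d ∈ F, ‖d‖_χ ≤ 1} ⟨g, d⟩| and ‖v‖ ≤ κ_n‖v‖_χ for all v. -/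
open scoped RealInnerProductSpace

/-- The first-order criticality measure `χ(g, y) = |min_{y+d ∈ F, ‖d‖_χ ≤ 1} ⟨g, d⟩|`,
where the norm `‖·‖_χ` is represented by the function `N`. -/
noncomputable def chi {n : ℕ} (F : Set (EuclideanSpace ℝ (Fin n)))
    (N : EuclideanSpace ℝ (Fin n) → ℝ) (g y : EuclideanSpace ℝ (Fin n)) : ℝ :=
  |sInf {r : ℝ | ∃ d, y + d ∈ F ∧ N d ≤ 1 ∧ r = ⟪g, d⟫}|

private lemma sInf_le_aux {n : ℕ} (F : Set (EuclideanSpace ℝ (Fin n)))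
    (N : EuclideanSpace ℝ (Fin n) → ℝ) (κn : ℝ) (hκn : 0 < κn)
    (hN : ∀ v, ‖v‖ ≤ κn * N v)
    (y : EuclideanSpace ℝ (Fin n))
    (g₁ g₂ : EuclideanSpace ℝ (Fin n)) (E : ℝ)
    (hg : ‖g₁ - g₂‖ ≤ E)
    (hne : ∃ d, y + d ∈ F ∧ N d ≤ 1) :
    sInf {r : ℝ | ∃ d, y + d ∈ F ∧ N d ≤ 1 ∧ r = ⟪g₁, d⟫} ≤
      sInf {r : ℝ | ∃ d, y + d ∈ F ∧ N d ≤ 1 ∧ r = ⟪g₂, d⟫} + κn * E := by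
  have hd_norm : ∀ d : EuclideanSpace ℝ (Fin n), N d ≤ 1 → ‖d‖ ≤ κn := fun d hd =>
    (hN d).trans (by nlinarith)
  have hbdd : BddBelow {r : ℝ | ∃ d, y + d ∈ F ∧ N d ≤ 1 ∧ r = ⟪g₁, d⟫} := by
    refine ⟨-(‖g₁‖ * κn), ?_⟩
    rintro r ⟨d, _, hd1, rfl⟩
    have h1 : |⟪g₁, d⟫| ≤ ‖g₁‖ * ‖d‖ := abs_real_inner_le_norm _ _
    have h2 : ‖d‖ ≤ κn := hd_norm d hd1
    have h3 : ‖g₁‖ * ‖d‖ ≤ ‖g₁‖ * κn := by nlinarith [norm_nonneg g₁]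
    have := abs_le.mp (h1.trans h3)
    linarith [this.1]
  have key : ∀ r ∈ {r : ℝ | ∃ d, y + d ∈ F ∧ N d ≤ 1 ∧ r = ⟪g₂, d⟫},
      sInf {r : ℝ | ∃ d, y + d ∈ F ∧ N d ≤ 1 ∧ r = ⟪g₁, d⟫} - κn * E ≤ r := by
    rintro r ⟨d, hdF, hd1, rfl⟩
    have hmem : ⟪g₁, d⟫ ∈ {r : ℝ | ∃ d, y + d ∈ F ∧ N d ≤ 1 ∧ r = ⟪g₁, d⟫} :=
      ⟨d, hdF, hd1, rfl⟩
    have hle : sInf {r : ℝ | ∃ d, y + d ∈ F ∧ N d ≤ 1 ∧ r = ⟪g₁, d⟫} ≤ ⟪g₁, d⟫ :=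
      csInf_le hbdd hmem
    have hdiff : ⟪g₁, d⟫ - ⟪g₂, d⟫ = ⟪g₁ - g₂, d⟫ := by
      rw [inner_sub_left]
    have h1 : |⟪g₁ - g₂, d⟫| ≤ ‖g₁ - g₂‖ * ‖d‖ := abs_real_inner_le_norm _ _
    have h2 : ‖d‖ ≤ κn := hd_norm d hd1
    have hEnn : 0 ≤ ‖g₁ - g₂‖ := norm_nonneg _
    have h3 : ‖g₁ - g₂‖ * ‖d‖ ≤ κn * E := by nlinarith [norm_nonneg d]
    have := abs_le.mp (h1.trans h3)
    linarith [this.1]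
  have hne2 : {r : ℝ | ∃ d, y + d ∈ F ∧ N d ≤ 1 ∧ r = ⟪g₂, d⟫}.Nonempty := by
    obtain ⟨d, h1, h2⟩ := hne
    exact ⟨⟪g₂, d⟫, d, h1, h2, rfl⟩
  have := le_csInf hne2 key
  linarith

theorem stmt7 (n : ℕ) (F : Set (EuclideanSpace ℝ (Fin n)))
    (hFcl : IsClosed F) (hFcv : Convex ℝ F) (hFne : F.Nonempty)
    (N : EuclideanSpace ℝ (Fin n) → ℝ) (κn : ℝ) (hκn : 0 < κn)
    (hN : ∀ v, ‖v‖ ≤ κn * N v)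
    (y : EuclideanSpace ℝ (Fin n)) (hy : y ∈ F)
    (g₁ g₂ : EuclideanSpace ℝ (Fin n)) (E : ℝ) (hE : 0 ≤ E)
    (hg : ‖g₁ - g₂‖ ≤ E) :
    |chi F N g₁ y - chi F N g₂ y| ≤ κn * E := by
  by_cases hne : ∃ d : EuclideanSpace ℝ (Fin n), y + d ∈ F ∧ N d ≤ 1
  · have h12 := sInf_le_aux F N κn hκn hN y g₁ g₂ E hg hne
    have h21 := sInf_le_aux F N κn hκn hN y g₂ g₁ E (by rwa [norm_sub_rev]) hne
    unfold chi
    have habs2 : |sInf {r : ℝ | ∃ d, y + d ∈ F ∧ N d ≤ 1 ∧ r = ⟪g₁, d⟫} -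
         sInf {r : ℝ | ∃ d, y + d ∈ F ∧ N d ≤ 1 ∧ r = ⟪g₂, d⟫}| ≤ κn * E :=
      abs_le.mpr ⟨by linarith, by linarith⟩
    exact (abs_abs_sub_abs_le_abs_sub _ _).trans habs2
  · have h1 : {r : ℝ | ∃ d, y + d ∈ F ∧ N d ≤ 1 ∧ r = ⟪g₁, d⟫} = ∅ := by
      ext r; simp only [Set.mem_setOf_eq, Set.mem_empty_iff_false, iff_false]
      rintro ⟨d, h1, h2, _⟩; exact hne ⟨d, h1, h2⟩
    have h2 : {r : ℝ | ∃ d, y + d ∈ F ∧ N d ≤ 1 ∧ r = ⟪g₂, d⟫} = ∅ := by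
      ext r; simp only [Set.mem_setOf_eq, Set.mem_empty_iff_false, iff_false]
      rintro ⟨d, h1, h2, _⟩; exact hne ⟨d, h1, h2⟩
    unfold chi
    rw [h1, h2]
    simp [Real.sInf_empty]
    positivity
end

section
/- In Phase 2 of the ARpGC algorithm, the target sequence (t_k) is strictly decreasing: if the update is t_{k+1} = f(x_{k+1}) - √(ε_P² - ‖c(x_{k+1})‖²) under the condition (f(x_{k+1})-t_k)² + ‖c(x_{k+1})‖² ≤ (ε_P - ε_P^{(p+1)/p})², then t_k - t_{k+1} ≥ ε_P^{(p+1)/p}; and if t_{k+1} = 2f(x_{k+1}) - t_k with f(x_{k+1}) < t_k, then t_{k+1} < t_k. -/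
theorem stmt15 (p : ℕ) (hp : 1 ≤ p) (εP : ℝ) (hεP : εP ∈ Set.Ioo (0 : ℝ) 1)
    (tk tk1 fk1 cn : ℝ) (hcn : 0 ≤ cn) :
    ((cn ≤ εP - εP ^ ((p + 1 : ℝ) / p) →
      (fk1 - tk) ^ 2 + cn ^ 2 ≤ (εP - εP ^ ((p + 1 : ℝ) / p)) ^ 2 →
      tk1 = fk1 - Real.sqrt (εP ^ 2 - cn ^ 2) →
      εP ^ ((p + 1 : ℝ) / p) ≤ tk - tk1)) ∧
    ((tk1 = 2 * fk1 - tk → fk1 < tk → tk1 < tk)) := by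
  obtain ⟨hεP0, hεP1⟩ := hεP
  constructor
  · intro h1 h2 h3
    set a := εP ^ ((p + 1 : ℝ) / p) with ha
    have hpR : (1 : ℝ) ≤ (p + 1 : ℝ) / p := by
      have hp' : (1 : ℝ) ≤ (p : ℝ) := by exact_mod_cast hp
      rw [le_div_iff₀ (by linarith)]; linarith
    have ha0 : 0 < a := Real.rpow_pos_of_pos hεP0 _
    have haε : a ≤ εP := by
      calc a ≤ εP ^ (1 : ℝ) :=
            Real.rpow_le_rpow_of_exponent_ge hεP0 (le_of_lt hεP1) hpR
        _ = εP := Real.rpow_one εP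
    set ω := εP - a with hω
    have hω0 : 0 ≤ ω := by linarith
    have hcn2 : cn ^ 2 ≤ ω ^ 2 := by nlinarith [sq_nonneg (fk1 - tk)]
    set s := Real.sqrt (ω ^ 2 - cn ^ 2) with hs
    have hs2 : s ^ 2 = ω ^ 2 - cn ^ 2 := Real.sq_sqrt (by linarith)
    have hs0 : 0 ≤ s := Real.sqrt_nonneg _
    have hsω : s ≤ ω := by
      calc s ≤ Real.sqrt (ω ^ 2) := Real.sqrt_le_sqrt (by nlinarith)
        _ = ω := by rw [Real.sqrt_sq hω0]
    have hft : fk1 - tk ≤ s := by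
      have : fk1 - tk ≤ Real.sqrt ((fk1 - tk) ^ 2) := by
        rw [Real.sqrt_sq_eq_abs]; exact le_abs_self _
      exact this.trans (Real.sqrt_le_sqrt (by nlinarith))
    have hkey : a + s ≤ Real.sqrt (εP ^ 2 - cn ^ 2) := by
      rw [show εP = a + ω by ring] at *
      have : (a + s) ^ 2 ≤ (a + ω) ^ 2 - cn ^ 2 := by nlinarith
      exact (Real.le_sqrt (by positivity) (by nlinarith)).mpr this
    rw [h3]; linarith
  · intro h1 h2; linarith
end

section
/- Let μ(x,t) = ½‖r(x,t)‖² with r(x,t) = (c(x), f(x)-t), and suppose f(x) > t. Setting y = c(x)/(f(x)-t) and Λ(x,y) = f(x) + yᵀc(x), one has ∇_x μ(x,t) = (f(x)-t)·∇_x Λ(x,y), and hence for the positively homogeneous criticality measure χ, χ_Λ(x,y) = χ_μ(x,t)/(f(x)-t); consequently χ_μ(x,t) ≤ ε_P·ε_D ≤ δ·ε_D·‖r(x,t)‖ implies χ_Λ(x,y) ≤ δ·ε_D·‖(y,1)‖. -/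
open scoped RealInnerProductSpace Pointwise

lemma chi_smul {n : ℕ} (F : Set (EuclideanSpace ℝ (Fin n)))
    (N : EuclideanSpace ℝ (Fin n) → ℝ) (g x : EuclideanSpace ℝ (Fin n)) {a : ℝ}
    (ha : 0 ≤ a) : chi F N (a • g) x = a * chi F N g x := by
  unfold chi
  have hset : {r : ℝ | ∃ d, x + d ∈ F ∧ N d ≤ 1 ∧ r = ⟪a • g, d⟫}
      = a • {r : ℝ | ∃ d, x + d ∈ F ∧ N d ≤ 1 ∧ r = ⟪g, d⟫} := by
    ext r
    simp only [Set.mem_smul_set, Set.mem_setOf_eq, smul_eq_mul]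
    constructor
    · rintro ⟨d, h1, h2, rfl⟩
      exact ⟨⟪g, d⟫, ⟨d, h1, h2, rfl⟩, (real_inner_smul_left g d a).symm⟩
    · rintro ⟨s, ⟨d, h1, h2, rfl⟩, rfl⟩
      exact ⟨d, h1, h2, (real_inner_smul_left g d a).symm⟩
  rw [hset, Real.sInf_smul_of_nonneg ha, smul_eq_mul, abs_mul, abs_of_nonneg ha]

theorem stmt18 (n m : ℕ) (δ εP εD t : ℝ) (hδ : 1 < δ) (hεP : 0 < εP) (hεD : 0 < εD)
    (F : Set (EuclideanSpace ℝ (Fin n))) (hFcl : IsClosed F) (hFcv : Convex ℝ F)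
    (N : EuclideanSpace ℝ (Fin n) → ℝ) (κn : ℝ) (hκn : 0 < κn)
    (hNhom : ∀ (a : ℝ) v, N (a • v) = |a| * N v)
    (hN : ∀ v, ‖v‖ ≤ κn * N v)
    (f : EuclideanSpace ℝ (Fin n) → ℝ)
    (c : EuclideanSpace ℝ (Fin n) → EuclideanSpace ℝ (Fin m))
    (x : EuclideanSpace ℝ (Fin n)) (hxF : x ∈ F)
    (hfd : DifferentiableAt ℝ f x) (hcd : DifferentiableAt ℝ c x)
    (hft : t < f x)
    (μ : EuclideanSpace ℝ (Fin n) → ℝ)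
    (hμ : μ = fun z => 1 / 2 * (‖c z‖ ^ 2 + (f z - t) ^ 2))
    (y : EuclideanSpace ℝ (Fin m)) (hy : y = (f x - t)⁻¹ • c x)
    (Λ : EuclideanSpace ℝ (Fin n) → ℝ)
    (hΛ : Λ = fun z => f z + ⟪y, c z⟫)
    (hr : εP ≤ δ * Real.sqrt (‖c x‖ ^ 2 + (f x - t) ^ 2)) :
    gradient μ x = (f x - t) • gradient Λ x ∧
    chi F N (gradient Λ x) x = chi F N (gradient μ x) x / (f x - t) ∧
    (chi F N (gradient μ x) x ≤ εP * εD →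
      chi F N (gradient Λ x) x ≤ δ * εD * Real.sqrt (‖y‖ ^ 2 + 1)) := by
  have ha : (0:ℝ) < f x - t := by linarith
  have ha' : f x - t ≠ 0 := ne_of_gt ha
  have hf' := hfd.hasFDerivAt
  have hc' := hcd.hasFDerivAt
  set D := fderiv ℝ c x with hD
  set Df := fderiv ℝ f x with hDf
  -- derivative of μ
  have hμ' : μ = fun z => 1 / 2 * (⟪c z, c z⟫ + (f z - t) ^ 2) := by
    funext z; rw [hμ, real_inner_self_eq_norm_sq]
  have hinner : HasFDerivAt (fun z => ⟪c z, c z⟫)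
      ((fderivInnerCLM ℝ (c x, c x)).comp (D.prod D)) x := hc'.inner ℝ hc'
  have hsq : HasFDerivAt (fun z => (f z - t) * (f z - t))
      ((f x - t) • Df + (f x - t) • Df) x := (hf'.sub_const t).mul (hf'.sub_const t)
  have hμ'' : μ = fun z => 1 / 2 * (⟪c z, c z⟫ + (f z - t) * (f z - t)) := by
    rw [hμ']; funext z; ring
  have hμder : HasFDerivAt μ
      ((1 / 2 : ℝ) • ((fderivInnerCLM ℝ (c x, c x)).comp (D.prod D)
        + ((f x - t) • Df + (f x - t) • Df))) x := by
    rw [hμ'']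
    exact (hinner.add hsq).const_mul (1 / 2)
  have hΛder : HasFDerivAt Λ
      (Df + (fderivInnerCLM ℝ (y, c x)).comp
        ((0 : EuclideanSpace ℝ (Fin n) →L[ℝ] EuclideanSpace ℝ (Fin m)).prod D)) x := by
    rw [hΛ]
    exact hf'.add ((hasFDerivAt_const y x).inner ℝ hc')
  have key : fderiv ℝ μ x = (f x - t) • fderiv ℝ Λ x := by
    rw [hμder.fderiv, hΛder.fderiv]
    ext v
    simp only [ContinuousLinearMap.smul_apply, ContinuousLinearMap.add_apply,
      ContinuousLinearMap.coe_comp', Function.comp_apply, ContinuousLinearMap.prod_apply,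
      fderivInnerCLM_apply, ContinuousLinearMap.zero_apply, smul_eq_mul, hy,
      real_inner_smul_left, inner_zero_left]
    rw [real_inner_comm (D v) (c x)]
    field_simp
    ring
  have hgrad : gradient μ x = (f x - t) • gradient Λ x := by
    unfold gradient
    rw [key, map_smul]
  have hchi : chi F N (gradient μ x) x = (f x - t) * chi F N (gradient Λ x) x := by
    rw [hgrad, chi_smul F N _ x ha.le]
  have hchi2 : chi F N (gradient Λ x) x = chi F N (gradient μ x) x / (f x - t) := by
    rw [hchi]; field_simp
  refine ⟨hgrad, hchi2, fun h => ?_⟩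
  have hnormy : ‖y‖ = (f x - t)⁻¹ * ‖c x‖ := by
    rw [hy, norm_smul, Real.norm_eq_abs, abs_of_pos (inv_pos.mpr ha)]
  have hs : Real.sqrt (‖c x‖ ^ 2 + (f x - t) ^ 2)
      = (f x - t) * Real.sqrt (‖y‖ ^ 2 + 1) := by
    rw [show ‖c x‖ ^ 2 + (f x - t) ^ 2 = (f x - t) ^ 2 * (‖y‖ ^ 2 + 1) by
      rw [hnormy]; field_simp]
    rw [Real.sqrt_mul (sq_nonneg _), Real.sqrt_sq ha.le]
  rw [hchi2]
  rw [hs] at hr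
  rw [div_le_iff₀ ha]
  nlinarith [Real.sqrt_nonneg (‖y‖ ^ 2 + 1)]
end
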